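/- For the van der Waals equation of state in one variable, the function n ↦ n·ln((1−n)/n) is concave on (0,1); that is, for all n₁, n₂ ∈ (0,1), n₂·ln((1−n₂)/n₂) − n₁·ln((1−n₁)/n₁) ≥ (ln((1−n₂)/n₂) − 1/(1−n₂))·(n₂ − n₁). -/

import Mathlib

/-!
On `(0, 1)` the function `n ↦ n log((1 - n)/n)` is the binary entropy plus `log (1 - n)`. Both
summands are concave, so it is concave, and a differentiable concave function lies below each of
its tangent lines.
-/

open Real Set

lemma ConcaveOn.le_add_mul_sub_of_hasDerivAt {S : Set ℝ} {f : ℝ → ℝ} {f' x y : ℝ}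
    (hf : ConcaveOn ℝ S f) (hx : x ∈ S) (hy : y ∈ S) (hf' : HasDerivAt f f' y) :
    f x ≤ f y + f' * (x - y) := by
  rcases lt_trichotomy x y with hxy | rfl | hxy
  · have h := hf.le_slope_of_hasDerivAt hx hy hxy hf'
    rw [slope_def_field, le_div_iff₀ (sub_pos.2 hxy)] at h
    linarith
  · simp
  · have h := hf.slope_le_of_hasDerivAt hy hx hxy hf'
    rw [slope_def_field, div_le_iff₀ (sub_pos.2 hxy)] at h
    linarith

lemma concaveOn_log_one_sub : ConcaveOn ℝ (Iio 1) fun x => log (1 - x) := by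
  refine ⟨convex_Iio 1, fun x hx y hy a b ha hb hab => ?_⟩
  have h := strictConcaveOn_log_Ioi.concaveOn.2 (mem_Ioi.2 (sub_pos.2 hx))
    (mem_Ioi.2 (sub_pos.2 hy)) ha hb hab
  convert h using 2
  simp only [smul_eq_mul]
  linear_combination -hab

lemma mul_log_one_sub_div_self_eq {n : ℝ} (h0 : 0 < n) (h1 : n < 1) :
    n * log ((1 - n) / n) = binEntropy n + log (1 - n) := by
  rw [binEntropy, log_div (sub_pos.2 h1).ne' h0.ne', log_inv, log_inv]
  ring

lemma concaveOn_mul_log_one_sub_div_self :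
    ConcaveOn ℝ (Ioo 0 1) fun n => n * log ((1 - n) / n) :=
  ((strictConcave_binEntropy.concaveOn.subset Ioo_subset_Icc_self (convex_Ioo 0 1)).add
    (concaveOn_log_one_sub.subset (fun _ hn => hn.2) (convex_Ioo 0 1))).congr
    fun _ hn => (mul_log_one_sub_div_self_eq hn.1 hn.2).symm

lemma hasDerivAt_mul_log_one_sub_div_self {n : ℝ} (h0 : 0 < n) (h1 : n < 1) :
    HasDerivAt (fun n => n * log ((1 - n) / n)) (log ((1 - n) / n) - 1 / (1 - n)) n := by
  have hq : HasDerivAt (fun n => (1 - n) / n) (-1 / n ^ 2) n :=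
    (((hasDerivAt_id' n).const_sub 1).div (hasDerivAt_id' n) h0.ne').congr_deriv (by ring)
  refine ((hasDerivAt_id' n).mul (hq.log (div_pos (sub_pos.2 h1) h0).ne')).congr_deriv ?_
  field_simp
  ring

/-- First-order concavity inequality for g(n) = n·ln((1−n)/n) on (0,1). -/
theorem vdw_entropy_concavity
    (n₁ n₂ : ℝ) (h₁ : n₁ ∈ Set.Ioo (0:ℝ) 1) (h₂ : n₂ ∈ Set.Ioo (0:ℝ) 1) :
    n₂ * Real.log ((1 - n₂) / n₂) - n₁ * Real.log ((1 - n₁) / n₁)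
      ≥ (Real.log ((1 - n₂) / n₂) - 1 / (1 - n₂)) * (n₂ - n₁) := by
  have h := concaveOn_mul_log_one_sub_div_self.le_add_mul_sub_of_hasDerivAt h₁ h₂
    (hasDerivAt_mul_log_one_sub_div_self h₂.1 h₂.2)
  linarith
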